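/- arXiv:1112.5255 — 3 statements merged into one kernel-verified Lean document; each statement's English description precedes it below -/
import Mathlib

section
/- For every integer r ≥ 1, the positive real root φ_r of the equation x + x^{-r} = 2 with φ_r ≥ 1 satisfies φ_r < 2 - 2^{-r}. -/
lemma zpow_neg_natCast_lt_zpow_neg_natCast {K : Type*} [Field K] [LinearOrder K]
    [IsStrictOrderedRing K] {a b : K} {n : ℕ} (ha : 0 < a) (hab : a < b) (hn : n ≠ 0) :
    b ^ (-(n : ℤ)) < a ^ (-(n : ℤ)) := by
  simp only [zpow_neg, zpow_natCast]
  exact inv_strictAnti₀ (pow_pos ha n) (pow_lt_pow_left₀ hab ha.le hn)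

theorem root_lt_two_sub (r : ℕ) (hr : 1 ≤ r) (x : ℝ) (hx : 1 ≤ x)
    (hroot : x + x ^ (-(r : ℤ)) = 2) :
    x < 2 - (2 : ℝ) ^ (-(r : ℤ)) := by
  have hx_pos : 0 < x := by linarith
  have hx_lt_two : x < 2 := by linarith [zpow_pos hx_pos (-(r : ℤ))]
  linarith [zpow_neg_natCast_lt_zpow_neg_natCast hx_pos hx_lt_two (by omega : r ≠ 0)]
end

section
/- With F the r-step Fibonacci sequence, for all t ≥ 0, F_{t+2}/2^t < 2·(1 - 2^{-(r+1)})^t. -/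
/-!
Put `c = 2 - 2⁻¹ ^ r = 2 q` with `q = 1 - 2 ^ (-(r + 1))`. Since `c ≤ 2`, we have
`c ^ r * (2 - c) = q ^ r ≤ 1`, which is equivalent to `∑_{i=1}^r c⁻¹ ^ i ≤ 1`; hence the bound
`F m ≤ c ^ (m - 1)` propagates through the recursion. Then `F (t + 2) / 2 ^ t ≤ 2 q ^ (t + 1)`,
and `q < 1` makes the inequality strict.
-/

open Finset

theorem sum_Icc_inv_pow_le_one {c : ℝ} {r : ℕ} (hc : 1 < c) (h : c ^ r * (2 - c) ≤ 1) :
    ∑ i ∈ Icc 1 r, c⁻¹ ^ i ≤ 1 := by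
  have hc0 : 0 < c := by linarith
  have hgeom : (∑ i ∈ Icc 1 r, c⁻¹ ^ i) * (1 - c⁻¹) = c⁻¹ - c⁻¹ ^ (r + 1) := by
    rw [← Ico_add_one_right_eq_Icc, geom_sum_Ico_mul_neg _ (by omega), pow_one]
  have hkey : c⁻¹ - c⁻¹ ^ (r + 1) ≤ 1 - c⁻¹ := by
    have hcr : c ^ r * c⁻¹ ^ r = 1 := by rw [← mul_pow, mul_inv_cancel₀ hc0.ne', one_pow]
    have hcc : c * c⁻¹ = 1 := mul_inv_cancel₀ hc0.ne'
    -- after multiplying by `c ^ (r + 1)` this reads `c ^ r - 1 ≤ c ^ (r + 1) - c ^ r`, i.e. `h`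
    rw [← mul_le_mul_iff_of_pos_left (pow_pos hc0 (r + 1))]
    linear_combination h + (2 * c ^ r - 1) * hcc - (c * c⁻¹) * hcr
  refine le_of_mul_le_mul_right ?_ (sub_pos.2 (inv_lt_one_of_one_lt₀ hc))
  linarith

theorem le_zpow_sub_one_of_sum_inv_pow_le_one {r : ℕ} {c : ℝ} (hc : 1 ≤ c)
    (hsum : ∑ i ∈ Icc 1 r, c⁻¹ ^ i ≤ 1) {F : ℤ → ℝ}
    (h0 : ∀ m : ℤ, m ≤ 0 → F m = 0) (h1 : F 1 = 1) (h2 : F 2 = 1)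
    (hrec : ∀ m : ℤ, 3 ≤ m → F m = ∑ i ∈ Icc 1 r, F (m - i)) (m : ℤ) :
    F m ≤ c ^ (m - 1) := by
  have hc0 : 0 < c := by linarith
  induction m using Int.strongRec (m := 3) with
  | lt m hm =>
    obtain hm | rfl | rfl : m ≤ 0 ∨ m = 1 ∨ m = 2 := by omega
    · rw [h0 m hm]; positivity
    · simp [h1]
    · simpa [h2] using hc
  | ge m hm ih =>
    calc F m = ∑ i ∈ Icc 1 r, F (m - i) := hrec m hm
      _ ≤ ∑ i ∈ Icc 1 r, c ^ (m - 1) * c⁻¹ ^ i := by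
        refine sum_le_sum fun i hi => ?_
        rw [inv_pow, ← div_eq_mul_inv, ← zpow_natCast, ← zpow_sub₀ hc0.ne', sub_right_comm]
        exact ih _ (by simp at hi; omega)
      _ = c ^ (m - 1) * ∑ i ∈ Icc 1 r, c⁻¹ ^ i := (mul_sum ..).symm
      _ ≤ c ^ (m - 1) := mul_le_of_le_one_right (by positivity) hsum

theorem two_mul_pow_mul_two_sub_le_one {q : ℝ} {r : ℕ} (hq : 0 ≤ q)
    (h : 2 ^ (r + 1) * (1 - q) = 1) : (2 * q) ^ r * (2 - 2 * q) ≤ 1 := by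
  have hq1 : q ≤ 1 := by nlinarith [pow_pos (two_pos (α := ℝ)) (r + 1)]
  calc (2 * q) ^ r * (2 - 2 * q) = q ^ r * (2 ^ (r + 1) * (1 - q)) := by ring
    _ = q ^ r := by rw [h, mul_one]
    _ ≤ 1 := pow_le_one₀ hq hq1

theorem fib_r_step_div_pow_lt (r : ℕ) (hr : 1 ≤ r) (F : ℤ → ℝ)
    (h0 : ∀ m : ℤ, m ≤ 0 → F m = 0) (h1 : F 1 = 1) (h2 : F 2 = 1)
    (hrec : ∀ m : ℤ, 3 ≤ m → F m = ∑ i ∈ Finset.Icc 1 r, F (m - i)) :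
    ∀ t : ℕ, F (t + 2) / 2 ^ t < 2 * (1 - (2 : ℝ) ^ (-((r : ℤ) + 1))) ^ t := by
  intro t
  rw [zpow_neg, ← Nat.cast_succ, zpow_natCast]
  set ε : ℝ := (2 ^ (r + 1))⁻¹
  have hε_mul : 2 ^ (r + 1) * ε = 1 := mul_inv_cancel₀ (by positivity)
  have hε_pos : 0 < ε := by positivity
  have hε_lt : ε < 2⁻¹ :=
    inv_strictAnti₀ two_pos (by simpa using pow_lt_pow_right₀ one_lt_two (by omega : 1 < r + 1))
  set q : ℝ := 1 - ε with hq
  clear_value q ε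
  have hq_pos : 0 < q := by linarith
  have hq_lt_one : q < 1 := by linarith
  have hF := le_zpow_sub_one_of_sum_inv_pow_le_one (by linarith)
    (sum_Icc_inv_pow_le_one (by linarith)
      (two_mul_pow_mul_two_sub_le_one hq_pos.le (by rw [hq, sub_sub_cancel, hε_mul])))
    h0 h1 h2 hrec (t + 2)
  rw [show (t : ℤ) + 2 - 1 = (t + 1 : ℕ) by push_cast; ring, zpow_natCast] at hF
  rw [div_lt_iff₀ (by positivity)]
  calc F (t + 2) ≤ (2 * q) ^ (t + 1) := hF
    _ = 2 * q ^ t * 2 ^ t * q := by ring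
    _ < 2 * q ^ t * 2 ^ t := mul_lt_of_lt_one_right (by positivity) hq_lt_one
end

section
/- Consider a Markov chain on states {0, 1, ..., r} where state 0 is absorbing, and from each state k ≥ 1 the chain moves to state k-1 with probability 1/2 and to state r with probability 1/2. Then starting from any state, the probability of not being absorbed within t steps is at most 2·(1 - 2^{-(r+1)})^t. -/
/-!
Take `w k = 2 - a / 2 ^ k` with `a = 2 ^ (r + 1) / (2 ^ r + 1)`, chosen so that `w 0 ≥ 0` and
`1 ≤ w k ≤ 2` for `k ≥ 1`. One step of the chain contracts `w` by `λ = 1 - 2 ^ (-(r + 1))`: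
`(w (k - 1) + w r) / 2 ≤ λ * w k` for `1 ≤ k ≤ r`, the gap being
`(2 ^ r - 2 ^ k) / (2 ^ r 2 ^ k (2 ^ r + 1)) ≥ 0`. Induction on `t` then bounds the survival probability
by `λ ^ t * w k ≤ 2 λ ^ t`.
-/

theorem le_pow_mul_of_step_le (r : ℕ) (f : ℕ → ℕ → ℝ)
    (habs : ∀ t, f t 0 = 0)
    (hinit : ∀ k, 1 ≤ k → k ≤ r → f 0 k = 1)
    (hrec : ∀ t k, 1 ≤ k → k ≤ r → f (t + 1) k = (f t (k - 1) + f t r) / 2)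
    (w : ℕ → ℝ) (lam : ℝ) (hlam : 0 ≤ lam) (hw0 : 0 ≤ w 0)
    (hw : ∀ k, 1 ≤ k → k ≤ r → 1 ≤ w k)
    (hstep : ∀ j, j + 1 ≤ r → (w j + w r) / 2 ≤ lam * w (j + 1)) :
    ∀ t, ∀ k ≤ r, f t k ≤ lam ^ t * w k := by
  intro t
  induction t with
  | zero =>
    rintro (_ | k) hk
    · simpa [habs] using hw0
    · simpa [hinit (k + 1) k.succ_pos hk] using hw (k + 1) k.succ_pos hk
  | succ t ih =>
    rintro (_ | j) hj
    · rw [habs]; exact mul_nonneg (pow_nonneg hlam _) hw0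
    · rw [hrec t (j + 1) j.succ_pos hj, Nat.add_sub_cancel]
      calc (f t j + f t r) / 2 ≤ lam ^ t * ((w j + w r) / 2) := by
            linarith [ih j (by omega), ih r le_rfl]
        _ ≤ lam ^ t * (lam * w (j + 1)) := by gcongr; exact hstep j hj
        _ = lam ^ (t + 1) * w (j + 1) := by ring

noncomputable def lyapunovWeight (r k : ℕ) : ℝ :=
  2 - 2 ^ (r + 1) / ((2 ^ r + 1) * 2 ^ k)

theorem lyapunovWeight_le_two (r k : ℕ) : lyapunovWeight r k ≤ 2 := by
  unfold lyapunovWeight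
  have : (0 : ℝ) ≤ 2 ^ (r + 1) / ((2 ^ r + 1) * 2 ^ k) := by positivity
  linarith

theorem lyapunovWeight_zero_nonneg (r : ℕ) : 0 ≤ lyapunovWeight r 0 := by
  unfold lyapunovWeight
  rw [sub_nonneg, div_le_iff₀ (by positivity)]
  simp only [pow_succ, pow_zero, mul_one]
  linarith

theorem one_le_lyapunovWeight (r k : ℕ) (hk : 1 ≤ k) : 1 ≤ lyapunovWeight r k := by
  unfold lyapunovWeight
  have h2k : (2 : ℝ) ≤ 2 ^ k := by simpa using pow_le_pow_right₀ (by norm_num : (1 : ℝ) ≤ 2) hk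
  have hP : (0 : ℝ) ≤ 2 ^ r + 1 := by positivity
  rw [le_sub_comm, div_le_iff₀ (by positivity), pow_succ]
  nlinarith [mul_le_mul_of_nonneg_left h2k hP]

theorem lyapunovWeight_step (r j : ℕ) (hj : j + 1 ≤ r) :
    (lyapunovWeight r j + lyapunovWeight r r) / 2
      ≤ (1 - ((2 : ℝ) ^ (r + 1))⁻¹) * lyapunovWeight r (j + 1) := by
  unfold lyapunovWeight
  have hQP : (2 : ℝ) ^ (j + 1) ≤ 2 ^ r := pow_le_pow_right₀ (by norm_num) hj
  generalize hP : (2 : ℝ) ^ r = P at hQP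
  have hPpos : 0 < P := hP ▸ by positivity
  have hQpos : (0 : ℝ) < 2 ^ j := by positivity
  rw [pow_succ] at hQP ⊢
  rw [pow_succ, hP]
  generalize (2 : ℝ) ^ j = Q at hQP hQpos ⊢
  rw [← sub_nonneg]
  have key : (1 - (P * 2)⁻¹) * (2 - P * 2 / ((P + 1) * (Q * 2)))
      - ((2 - P * 2 / ((P + 1) * Q)) + (2 - P * 2 / ((P + 1) * P))) / 2
      = (P - 2 * Q) / (2 * P * Q * (P + 1)) := by
    field_simp
    ring
  rw [key]
  exact div_nonneg (by linarith) (by positivity)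

theorem markov_not_absorbed_bound_general (r : ℕ) (f : ℕ → ℕ → ℝ)
    (habs : ∀ t, f t 0 = 0)
    (hinit : ∀ k, 1 ≤ k → k ≤ r → f 0 k = 1)
    (hrec : ∀ t k, 1 ≤ k → k ≤ r → f (t + 1) k = (f t (k - 1) + f t r) / 2) :
    ∀ t : ℕ, ∀ k ≤ r, f t k ≤ 2 * (1 - (2 : ℝ) ^ (-((r : ℤ) + 1))) ^ t := by
  have hrate : (2 : ℝ) ^ (-((r : ℤ) + 1)) = ((2 : ℝ) ^ (r + 1))⁻¹ := by
    rw [← zpow_natCast, ← zpow_neg]; push_cast; rfl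
  have hlam : 0 ≤ 1 - ((2 : ℝ) ^ (r + 1))⁻¹ :=
    sub_nonneg.mpr (inv_le_one_of_one_le₀ (one_le_pow₀ (by norm_num)))
  intro t k hk
  rw [hrate]
  calc f t k ≤ (1 - ((2 : ℝ) ^ (r + 1))⁻¹) ^ t * lyapunovWeight r k :=
        le_pow_mul_of_step_le r f habs hinit hrec (lyapunovWeight r) _ hlam
          (lyapunovWeight_zero_nonneg r) (fun k hk _ => one_le_lyapunovWeight r k hk)
          (lyapunovWeight_step r) t k hk
    _ ≤ (1 - ((2 : ℝ) ^ (r + 1))⁻¹) ^ t * 2 := by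
        gcongr; exact lyapunovWeight_le_two r k
    _ = 2 * (1 - ((2 : ℝ) ^ (r + 1))⁻¹) ^ t := mul_comm _ _

theorem markov_not_absorbed_bound (r : ℕ) (hr : 1 ≤ r) (f : ℕ → ℕ → ℝ)
    (habs : ∀ t, f t 0 = 0)
    (hinit : ∀ k, 1 ≤ k → k ≤ r → f 0 k = 1)
    (hrec : ∀ t k, 1 ≤ k → k ≤ r → f (t + 1) k = (f t (k - 1) + f t r) / 2) :
    ∀ t : ℕ, ∀ k ≤ r, f t k ≤ 2 * (1 - (2 : ℝ) ^ (-((r : ℤ) + 1))) ^ t :=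
  markov_not_absorbed_bound_general r f habs hinit hrec
end
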